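/- Let α ∈ ℂ, let I ⊆ ℝ∖{0} be an open interval, and let u₁, v₁ : I → ℂ be differentiable with v₁(s) ≠ 0 for all s ∈ I, satisfying s·u₁′ = (1/2)s·u₁ − 2u₁²v₁(v₁²−1) + 2α·u₁v₁ and s·v₁′ = −(1/2)s·v₁ + u₁(v₁²−1)² − α(v₁²−1) on I. Define u₂ := −u₁v₁² and v₂ := 1/v₁. Then the quadruple (u₁, v₁, u₂, v₂) satisfies the coupled Painlevé V system with parameters (α, 0) on I. Moreover, if α = 0, then the Hamiltonian of the coupled Painlevé V system satisfies s·H = u₁²(v₁²−1)² − s·u₁v₁ on I. -/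

import Mathlib

open Complex Filter Topology MeasureTheory

/-- Right-hand side of the `u₁`-equation of the coupled Painlevé V system in
dimension four: `s·u₁′ = (s/2)u₁ − u₁²(v₁−1)(3v₁−1) − u₁u₂(v₂−1)(2v₁+v₂−1)
+ 2(α+β)u₁v₁ − 2βu₁`. -/
noncomputable def cpvRHSu₁ (α β s u₁ u₂ v₁ v₂ : ℂ) : ℂ :=
  (s / 2) * u₁ - u₁ ^ 2 * (v₁ - 1) * (3 * v₁ - 1)
    - u₁ * u₂ * (v₂ - 1) * (2 * v₁ + v₂ - 1) + 2 * (α + β) * u₁ * v₁ - 2 * β * u₁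

/-- Right-hand side of the `u₂`-equation of the coupled Painlevé V system. -/
noncomputable def cpvRHSu₂ (α β s u₁ u₂ v₁ v₂ : ℂ) : ℂ :=
  -(s / 2) * u₂ - u₂ ^ 2 * (v₂ - 1) * (3 * v₂ - 1)
    - u₁ * u₂ * (v₁ - 1) * (v₁ + 2 * v₂ - 1) + 2 * (α + β) * u₂ * v₂ - 2 * β * u₂

/-- Right-hand side of the `v₁`-equation of the coupled Painlevé V system. -/
noncomputable def cpvRHSv₁ (α β s u₁ u₂ v₁ v₂ : ℂ) : ℂ :=
  -(s / 2) * v₁ + 2 * u₁ * v₁ * (v₁ - 1) ^ 2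
    + u₂ * (v₁ + v₂) * (v₁ - 1) * (v₂ - 1) - α * (v₁ ^ 2 - 1) - β * (v₁ - 1) ^ 2

/-- Right-hand side of the `v₂`-equation of the coupled Painlevé V system. -/
noncomputable def cpvRHSv₂ (α β s u₁ u₂ v₁ v₂ : ℂ) : ℂ :=
  (s / 2) * v₂ + 2 * u₂ * v₂ * (v₂ - 1) ^ 2
    + u₁ * (v₁ + v₂) * (v₁ - 1) * (v₂ - 1) - α * (v₂ ^ 2 - 1) - β * (v₂ - 1) ^ 2

/-- `s·H` for the coupled Painlevé V system: `s·H = u₁²v₁(v₁−1)² + u₂²v₂(v₂−1)²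
− (s/2)(u₁v₁ − u₂v₂) − α(u₁(v₁²−1) + u₂(v₂²−1)) − β(u₁(v₁−1)² + u₂(v₂−1)²)
+ u₁u₂(v₁+v₂)(v₁−1)(v₂−1)`. -/
noncomputable def cpvSH (α β s u₁ u₂ v₁ v₂ : ℂ) : ℂ :=
  u₁ ^ 2 * v₁ * (v₁ - 1) ^ 2 + u₂ ^ 2 * v₂ * (v₂ - 1) ^ 2
    - (s / 2) * (u₁ * v₁ - u₂ * v₂)
    - α * (u₁ * (v₁ ^ 2 - 1) + u₂ * (v₂ ^ 2 - 1))
    - β * (u₁ * (v₁ - 1) ^ 2 + u₂ * (v₂ - 1) ^ 2)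
    + u₁ * u₂ * (v₁ + v₂) * (v₁ - 1) * (v₂ - 1)

/-- The Hamiltonian `H` of the coupled Painlevé V system, defined by `s·H = cpvSH`. -/
noncomputable def cpvH (α β s u₁ u₂ v₁ v₂ : ℂ) : ℂ := cpvSH α β s u₁ u₂ v₁ v₂ / s

/-- `(u₁, u₂, v₁, v₂)` is a solution of the coupled Painlevé V system in dimension
four with parameters `(α, β)` on a set `I ⊆ ℝ` of (nonzero) real values of `s`. -/
def IsCPVSolutionOn (α β : ℂ) (I : Set ℝ) (u₁ u₂ v₁ v₂ : ℝ → ℂ) : Prop :=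
  ∀ s ∈ I,
    DifferentiableAt ℝ u₁ s ∧ DifferentiableAt ℝ u₂ s ∧
    DifferentiableAt ℝ v₁ s ∧ DifferentiableAt ℝ v₂ s ∧
    (s : ℂ) * deriv u₁ s = cpvRHSu₁ α β s (u₁ s) (u₂ s) (v₁ s) (v₂ s) ∧
    (s : ℂ) * deriv u₂ s = cpvRHSu₂ α β s (u₁ s) (u₂ s) (v₁ s) (v₂ s) ∧
    (s : ℂ) * deriv v₁ s = cpvRHSv₁ α β s (u₁ s) (u₂ s) (v₁ s) (v₂ s) ∧
    (s : ℂ) * deriv v₂ s = cpvRHSv₂ α β s (u₁ s) (u₂ s) (v₁ s) (v₂ s)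

/-- `(u₁, u₂, v₁, v₂)`, as functions of `t > 0`, form a solution of the coupled
Painlevé V system with parameters `(α, β)` on the negative imaginary ray
`s = −it`, `t > 0`, where `d/ds` is interpreted as `i·d/dt`. -/
def IsCPVSolutionNegIm (α β : ℂ) (u₁ u₂ v₁ v₂ : ℝ → ℂ) : Prop :=
  ∀ t : ℝ, 0 < t →
    DifferentiableAt ℝ u₁ t ∧ DifferentiableAt ℝ u₂ t ∧
    DifferentiableAt ℝ v₁ t ∧ DifferentiableAt ℝ v₂ t ∧
    (-Complex.I * t) * (Complex.I * deriv u₁ t)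
      = cpvRHSu₁ α β (-Complex.I * t) (u₁ t) (u₂ t) (v₁ t) (v₂ t) ∧
    (-Complex.I * t) * (Complex.I * deriv u₂ t)
      = cpvRHSu₂ α β (-Complex.I * t) (u₁ t) (u₂ t) (v₁ t) (v₂ t) ∧
    (-Complex.I * t) * (Complex.I * deriv v₁ t)
      = cpvRHSv₁ α β (-Complex.I * t) (u₁ t) (u₂ t) (v₁ t) (v₂ t) ∧
    (-Complex.I * t) * (Complex.I * deriv v₂ t)
      = cpvRHSv₂ α β (-Complex.I * t) (u₁ t) (u₂ t) (v₁ t) (v₂ t)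

/-!
For `β = 0` the coupled Painlevé V system is compatible with the constraints `u₂ = −u₁v₁²`,
`v₂ = 1/v₁`: substituting them, each right-hand side becomes an explicit expression in the
reduced right-hand sides, namely the one the chain rule predicts for `(−u₁v₁²)′` and `(1/v₁)′`.
Everything is then a pointwise rational-function identity in `v₁ ≠ 0`.
-/

noncomputable def reducedRHSu (α s u v : ℂ) : ℂ :=
  (1/2) * s * u - 2 * u ^ 2 * v * (v ^ 2 - 1) + 2 * α * u * v

noncomputable def reducedRHSv (α s u v : ℂ) : ℂ :=
  -(1/2) * s * v + u * (v ^ 2 - 1) ^ 2 - α * (v ^ 2 - 1)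

section Substitution

variable (α s u : ℂ) {v : ℂ}

theorem cpvRHSu₁_reduction (hv : v ≠ 0) :
    cpvRHSu₁ α 0 s u (-u * v ^ 2) v v⁻¹ = reducedRHSu α s u v := by
  simp only [cpvRHSu₁, reducedRHSu]
  field_simp
  ring

theorem cpvRHSv₁_reduction (hv : v ≠ 0) :
    cpvRHSv₁ α 0 s u (-u * v ^ 2) v v⁻¹ = reducedRHSv α s u v := by
  simp only [cpvRHSv₁, reducedRHSv]
  field_simp
  ring

theorem cpvRHSu₂_reduction (hv : v ≠ 0) :
    cpvRHSu₂ α 0 s u (-u * v ^ 2) v v⁻¹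
      = -(reducedRHSu α s u v * v ^ 2) - 2 * u * v * reducedRHSv α s u v := by
  simp only [cpvRHSu₂, reducedRHSu, reducedRHSv]
  field_simp
  ring

theorem cpvRHSv₂_reduction (hv : v ≠ 0) :
    cpvRHSv₂ α 0 s u (-u * v ^ 2) v v⁻¹ = -reducedRHSv α s u v / v ^ 2 := by
  simp only [cpvRHSv₂, reducedRHSv]
  field_simp
  ring

theorem cpvSH_reduction (hv : v ≠ 0) :
    cpvSH 0 0 s u (-u * v ^ 2) v v⁻¹ = u ^ 2 * (v ^ 2 - 1) ^ 2 - s * u * v := by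
  simp only [cpvSH]
  field_simp
  ring

end Substitution

theorem reduced_system_gives_cpv_solution
    (α : ℂ) (I : Set ℝ) (u₁ v₁ : ℝ → ℂ)
    (hdiff : ∀ s ∈ I, DifferentiableAt ℝ u₁ s ∧ DifferentiableAt ℝ v₁ s)
    (hv0 : ∀ s ∈ I, v₁ s ≠ 0)
    (hu : ∀ s ∈ I, (s : ℂ) * deriv u₁ s
      = (1/2) * (s : ℂ) * u₁ s - 2 * (u₁ s) ^ 2 * v₁ s * ((v₁ s) ^ 2 - 1)
          + 2 * α * u₁ s * v₁ s)
    (hv : ∀ s ∈ I, (s : ℂ) * deriv v₁ s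
      = -(1/2) * (s : ℂ) * v₁ s + u₁ s * ((v₁ s) ^ 2 - 1) ^ 2
          - α * ((v₁ s) ^ 2 - 1)) :
    IsCPVSolutionOn α 0 I u₁ (fun s => -u₁ s * (v₁ s) ^ 2) v₁
      (fun s => (v₁ s)⁻¹) ∧
    (α = 0 → ∀ s ∈ I,
      cpvSH 0 0 (s : ℂ) (u₁ s) (-u₁ s * (v₁ s) ^ 2) (v₁ s) ((v₁ s)⁻¹)
        = (u₁ s) ^ 2 * ((v₁ s) ^ 2 - 1) ^ 2 - (s : ℂ) * u₁ s * v₁ s) := by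
  refine ⟨fun s hs => ?_, fun hα s hs => hα ▸ cpvSH_reduction _ _ (hv0 s hs)⟩
  obtain ⟨hu₁, hv₁⟩ := hdiff s hs
  have hvs := hv0 s hs
  have hdu : (s : ℂ) * deriv u₁ s = reducedRHSu α s (u₁ s) (v₁ s) := hu s hs
  have hdv : (s : ℂ) * deriv v₁ s = reducedRHSv α s (u₁ s) (v₁ s) := hv s hs
  have hu₂ := hu₁.hasDerivAt.fun_neg.fun_mul (hv₁.hasDerivAt.fun_pow 2)
  have hv₂ := hv₁.hasDerivAt.fun_inv hvs
  refine ⟨hu₁, hu₂.differentiableAt, hv₁, hv₂.differentiableAt, ?_, ?_, ?_, ?_⟩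
  · rwa [cpvRHSu₁_reduction _ _ _ hvs]
  · rw [hu₂.deriv, cpvRHSu₂_reduction _ _ _ hvs]
    linear_combination (-(v₁ s) ^ 2) * hdu - 2 * u₁ s * v₁ s * hdv
  · rwa [cpvRHSv₁_reduction _ _ _ hvs]
  · rw [hv₂.deriv, cpvRHSv₂_reduction _ _ _ hvs]
    linear_combination (-(v₁ s ^ 2)⁻¹) * hdv
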